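/- arXiv:1006.5896 — 2 statements merged into one kernel-verified Lean document; each statement's English description precedes it below -/
import Mathlib

section
/- Soundness of abstraction for free-for-negation: let φ be a propositional formula over a finite variable set V, let x ∈ V, and let W be a collection of subsets of V each of which contains x. If for every valuation ν with ν ⊨ φ and ν x = true there exists S ∈ W such that ν[S↦0] ⊨ φ, then x is free for negation in φ. -/
variable {V : Type*} [Fintype V]

/-- Pointwise order on valuations: `ν' ≤ ν` iff every variable true in `ν'` is true in `ν`. -/
def VLE (ν' ν : V → Bool) : Prop := ∀ x, ν' x = true → ν x = true

/-- `ν` is a minimal model of `φ`: it is a model and no strictly smaller valuation is a model. -/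
def IsMinimalModel (φ : (V → Bool) → Prop) (ν : V → Bool) : Prop :=
  φ ν ∧ ¬ ∃ ν', VLE ν' ν ∧ ν' ≠ ν ∧ φ ν'

/-- `φ ⊨_min ψ`: every minimal model of `φ` satisfies `ψ`. -/
def EntailsMin (φ ψ : (V → Bool) → Prop) : Prop :=
  ∀ ν, IsMinimalModel φ ν → ψ ν

/-- `ν[S↦0]`: the valuation agreeing with `ν` outside `S` and assigning `false` on `S`. -/
noncomputable def setZero (ν : V → Bool) (S : Set V) : V → Bool :=
  fun x => @ite _ (x ∈ S) (Classical.propDecidable _) false (ν x)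

/-- `x` is free for negation in `φ`: every minimal model of `φ` assigns `false` to `x`. -/
def FreeForNegation (φ : (V → Bool) → Prop) (x : V) : Prop :=
  ∀ ν, IsMinimalModel φ ν → ν x = false

section

variable {α : Type*} {ν : α → Bool} {S : Set α} {x : α}

lemma setZero_vle (ν : α → Bool) (S : Set α) : VLE (setZero ν S) ν := by
  intro y hy
  by_cases hyS : y ∈ S <;> simp_all [setZero]

lemma setZero_apply_of_mem (ν : α → Bool) (hx : x ∈ S) : setZero ν S x = false := by
  simp [setZero, hx]

lemma setZero_ne_of_mem (hx : x ∈ S) (hνx : ν x = true) : setZero ν S ≠ ν := fun h => by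
  simpa [setZero_apply_of_mem ν hx, hνx] using congrFun h x

lemma IsMinimalModel.eq_of_vle {φ : (α → Bool) → Prop} {ν' : α → Bool}
    (hν : IsMinimalModel φ ν) (hle : VLE ν' ν) (hφ : φ ν') : ν' = ν :=
  by_contra fun hne => hν.2 ⟨ν', hle, hne, hφ⟩

end

theorem stmt_7 (φ : (V → Bool) → Prop) (x : V) (W : Set (Set V))
    (hW : ∀ S ∈ W, x ∈ S)
    (h : ∀ ν : V → Bool, φ ν → ν x = true → ∃ S ∈ W, φ (setZero ν S)) :
    FreeForNegation φ x := by
  intro ν hν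
  by_contra hνx
  rw [Bool.not_eq_false] at hνx
  obtain ⟨S, hS, hφS⟩ := h ν hν.1 hνx
  exact setZero_ne_of_mem (hW S hS) hνx (hν.eq_of_vle (setZero_vle ν S) hφS)
end

section
/- Let φ be a propositional formula over a finite variable set V and let x, y ∈ V. If x is free for negation in φ (every minimal model of φ assigns false to x), then y is free for negation in the formula φ ∧ ¬x (whose models are the models ν of φ with ν x = false) if and only if y is free for negation in φ. -/
/-! Since `ν x = false` is preserved when passing to smaller valuations, a minimal model of
`φ ∧ ¬x` is a minimal model of `φ`; conversely, every minimal model of `φ` already falsifies `x`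
when `x` is free for negation. So the two formulas have the same minimal models. -/

variable {V : Type*} [Fintype V]

theorem minimal_and_iff_of_isLowerSet {α : Type*} [Preorder α] {P Q : α → Prop} {a : α}
    (hQ : IsLowerSet {b | Q b}) (hPQ : ∀ ⦃b⦄, Minimal P b → Q b) :
    Minimal (fun b => P b ∧ Q b) a ↔ Minimal P a :=
  ⟨fun h => ⟨h.prop.1, fun _ hb hba => h.le_of_le ⟨hb, hQ hba h.prop.2⟩ hba⟩,
    fun h => h.and_right (hPQ h)⟩

omit [Fintype V] in
theorem vle_iff_le {ν' ν : V → Bool} : VLE ν' ν ↔ ν' ≤ ν := by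
  simp only [VLE, Pi.le_def, Bool.le_iff_imp]

omit [Fintype V] in
theorem isMinimalModel_iff_minimal {φ : (V → Bool) → Prop} {ν : V → Bool} :
    IsMinimalModel φ ν ↔ Minimal φ ν := by
  simp only [IsMinimalModel, minimal_iff, vle_iff_le, not_exists, not_and_or, not_not]
  exact and_congr_right fun _ => forall_congr' fun ν' => by grind

omit [Fintype V] in
theorem isLowerSet_setOf_apply_eq_false (x : V) : IsLowerSet {ν : V → Bool | ν x = false} :=
  fun _ _ hle hν => le_bot_iff.mp ((hle x).trans_eq hν)

theorem stmt_9 (φ : (V → Bool) → Prop) (x y : V)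
    (hx : FreeForNegation φ x) :
    FreeForNegation (fun ν => φ ν ∧ ν x = false) y ↔ FreeForNegation φ y := by
  have hmin (ν : V → Bool) :
      IsMinimalModel (fun ν => φ ν ∧ ν x = false) ν ↔ IsMinimalModel φ ν := by
    simp only [isMinimalModel_iff_minimal]
    exact minimal_and_iff_of_isLowerSet (isLowerSet_setOf_apply_eq_false x)
      fun ν h => hx ν (isMinimalModel_iff_minimal.mpr h)
  exact forall_congr' fun ν => imp_congr_left (hmin ν)
end
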